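/- Let (A_l, B_l, C_l, D_l) be an ODE-LTI associated with the DAE d(Ex)/dt = Ax + Bu. For any absolutely continuous v and locally integrable g on an interval I with v̇ = A_l v + B_l g a.e., the pair (x,u) defined by (x;u) = C_l v + D_l g is a solution of the DAE on I. -/

import Mathlib

open MeasureTheory Set Filter Matrix

open Classical in
noncomputable def pinv {α β : Type} [Fintype α] [Fintype β] [DecidableEq α] [DecidableEq β]
    (M : Matrix α β ℝ) : Matrix β α ℝ :=
  if h : ∃ X : Matrix β α ℝ,
      M * X * M = M ∧ X * M * X = X ∧ (M * X)ᵀ = M * X ∧ (X * M)ᵀ = X * M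
  then h.choose else 0

def IsNiceInterval (I : Set ℝ) : Prop :=
  (∃ a b, I = Set.Icc a b) ∨ (∃ a, I = Set.Ici a) ∨ (∃ a, I = Set.Iic a) ∨ I = Set.univ

def IsDAESolution {c n m : ℕ} (E A : Matrix (Fin c) (Fin n) ℝ)
    (B : Matrix (Fin c) (Fin m) ℝ) (I : Set ℝ)
    (x : ℝ → Fin n → ℝ) (u : ℝ → Fin m → ℝ) : Prop :=
  LocallyIntegrableOn x I ∧ LocallyIntegrableOn u I ∧
  ∀ t₀ ∈ I, ∀ t ∈ I, t₀ ≤ t →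
    E.mulVec (x t) = E.mulVec (x t₀) + ∫ s in t₀..t, (A.mulVec (x s) + B.mulVec (u s))

def IsStateTraj {r : ℕ} {σ : Type} [Fintype σ] (Al : Matrix (Fin r) (Fin r) ℝ)
    (Bl : Matrix (Fin r) σ ℝ)
    (I : Set ℝ) (p : ℝ → Fin r → ℝ) (g : ℝ → σ → ℝ) : Prop :=
  LocallyIntegrableOn p I ∧ LocallyIntegrableOn g I ∧
  ∀ t₀ ∈ I, ∀ t ∈ I, t₀ ≤ t →
    p t = p t₀ + ∫ τ in t₀..t, (Al.mulVec (p τ) + Bl.mulVec (g τ))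

def RealizesOn {c n m nh k : ℕ} (E A : Matrix (Fin c) (Fin n) ℝ) (B : Matrix (Fin c) (Fin m) ℝ)
    (Al : Matrix (Fin nh) (Fin nh) ℝ) (Bl : Matrix (Fin nh) (Fin k) ℝ)
    (Cl : Matrix (Fin n ⊕ Fin m) (Fin nh) ℝ) (Dl : Matrix (Fin n ⊕ Fin m) (Fin k) ℝ)
    (I : Set ℝ) : Prop :=
  (∀ x u, IsDAESolution E A B I x u →
    ∃ p g, IsStateTraj Al Bl I p g ∧
      ∀ᵐ t ∂(volume.restrict I), Sum.elim (x t) (u t) = Cl.mulVec (p t) + Dl.mulVec (g t)) ∧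
  (∀ p g, IsStateTraj Al Bl I p g →
    ∃ x u, IsDAESolution E A B I x u ∧
      ∀ᵐ t ∂(volume.restrict I), Sum.elim (x t) (u t) = Cl.mulVec (p t) + Dl.mulVec (g t))

def firstRows {n m nh : ℕ} (Cl : Matrix (Fin n ⊕ Fin m) (Fin nh) ℝ) :
    Matrix (Fin n) (Fin nh) ℝ :=
  Matrix.of fun i j => Cl (Sum.inl i) j

def IsAssociated {c n m nh k : ℕ} (E A : Matrix (Fin c) (Fin n) ℝ)
    (B : Matrix (Fin c) (Fin m) ℝ)
    (Al : Matrix (Fin nh) (Fin nh) ℝ) (Bl : Matrix (Fin nh) (Fin k) ℝ)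
    (Cl : Matrix (Fin n ⊕ Fin m) (Fin nh) ℝ) (Dl : Matrix (Fin n ⊕ Fin m) (Fin k) ℝ) : Prop :=
  nh ≤ n ∧
  ((Dl = 0 ∧ Bl = 0 ∧ k = 1) ∨ Dl.rank = k) ∧
  E * firstRows Dl = 0 ∧ (E * firstRows Cl).rank = nh ∧
  ∀ I : Set ℝ, IsNiceInterval I → RealizesOn E A B Al Bl Cl Dl I

def ConsistencySet {c n m : ℕ} (E A : Matrix (Fin c) (Fin n) ℝ)
    (B : Matrix (Fin c) (Fin m) ℝ) : Set (Fin c → ℝ) :=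
  {z | ∃ I : Set ℝ, IsNiceInterval I ∧ (0 : ℝ) ∈ I ∧
    ∃ x u, IsDAESolution E A B I x u ∧ E.mulVec (x 0) = z}

/-!
The realization property hands us a DAE solution `(x, u)` that agrees with `C_l v + D_l g` only
almost everywhere. Changing a solution on a null set keeps it a solution as soon as `E x` stays
continuous: both `E x` (a primitive of `A x + B u`) and the modified `E x'` are then continuous
functions that agree a.e. on each interval, hence everywhere. For `x' = (C_l v + D_l g)_x` we
have `E x' = (E C_l) v` since `E D_l = 0`, and `v` is continuous as a primitive of
`A_l v + B_l g`.
-/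

theorem IsNiceInterval.ordConnected {I : Set ℝ} (hI : IsNiceInterval I) : I.OrdConnected := by
  rcases hI with ⟨a, b, rfl⟩ | ⟨a, rfl⟩ | ⟨a, rfl⟩ | rfl <;> infer_instance

theorem LocallyIntegrableOn.matrix_mulVec {X α β : Type*} [MeasurableSpace X]
    [TopologicalSpace X] {μ : Measure X} {s : Set X} [Fintype α] [Fintype β] {w : X → α → ℝ}
    (hw : LocallyIntegrableOn w s μ) (M : Matrix β α ℝ) :
    LocallyIntegrableOn (fun t => M *ᵥ w t) s μ :=
  (LinearMap.toContinuousLinearMap M.mulVecLin).locallyIntegrableOn_comp hw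

theorem continuousOn_Icc_of_eq_add_integral {E : Type*} [NormedAddCommGroup E]
    [NormedSpace ℝ E] {F f : ℝ → E} {a b : ℝ} (hf : IntegrableOn f (uIcc a b))
    (hF : ∀ s ∈ Icc a b, F s = F a + ∫ τ in a..s, f τ) : ContinuousOn F (Icc a b) :=
  ((continuousOn_const.add (intervalIntegral.continuousOn_primitive_interval hf)).mono
    Icc_subset_uIcc).congr hF

section Trajectories

variable {I : Set ℝ} {a b : ℝ}

theorem IsStateTraj.continuousOn_Icc {r : ℕ} {σ : Type} [Fintype σ]
    {Al : Matrix (Fin r) (Fin r) ℝ} {Bl : Matrix (Fin r) σ ℝ} {p : ℝ → Fin r → ℝ}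
    {g : ℝ → σ → ℝ} (h : IsStateTraj Al Bl I p g) (hI : I.OrdConnected) (ha : a ∈ I)
    (hb : b ∈ I) : ContinuousOn p (Icc a b) :=
  continuousOn_Icc_of_eq_add_integral
    (((LocallyIntegrableOn.matrix_mulVec h.1 Al).add
      (LocallyIntegrableOn.matrix_mulVec h.2.1 Bl)).integrableOn_compact_subset
      (hI.uIcc_subset ha hb) isCompact_uIcc)
    fun s hs => h.2.2 a ha s (hI.out ha hb hs) hs.1

variable {c n m : ℕ} {E A : Matrix (Fin c) (Fin n) ℝ} {B : Matrix (Fin c) (Fin m) ℝ}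
  {x x' : ℝ → Fin n → ℝ} {u u' : ℝ → Fin m → ℝ}

theorem IsDAESolution.continuousOn_Icc_mulVec (h : IsDAESolution E A B I x u)
    (hI : I.OrdConnected) (ha : a ∈ I) (hb : b ∈ I) :
    ContinuousOn (fun t => E *ᵥ x t) (Icc a b) :=
  continuousOn_Icc_of_eq_add_integral
    (((LocallyIntegrableOn.matrix_mulVec h.1 A).add
      (LocallyIntegrableOn.matrix_mulVec h.2.1 B)).integrableOn_compact_subset
      (hI.uIcc_subset ha hb) isCompact_uIcc)
    fun s hs => h.2.2 a ha s (hI.out ha hb hs) hs.1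

theorem IsDAESolution.of_ae_eq (h : IsDAESolution E A B I x u) (hI : I.OrdConnected)
    (hx : x =ᵐ[volume.restrict I] x') (hu : u =ᵐ[volume.restrict I] u')
    (hcont : ∀ a ∈ I, ∀ b ∈ I, ContinuousOn (fun t => E *ᵥ x' t) (Icc a b)) :
    IsDAESolution E A B I x' u' := by
  refine ⟨h.1.congr hx, h.2.1.congr hu, fun a ha b hb hab => ?_⟩
  rcases hab.eq_or_lt with rfl | hlt
  · simp
  have hEx : EqOn (fun t => E *ᵥ x t) (fun t => E *ᵥ x' t) (Icc a b) :=
    Measure.eqOn_Icc_of_ae_eq volume hlt.ne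
      (ae_restrict_of_ae_restrict_of_subset (hI.out ha hb) <|
        hx.mono fun t ht => congrArg (E *ᵥ ·) ht)
      (h.continuousOn_Icc_mulVec hI ha hb) (hcont a ha b hb)
  have hint : ∫ t in a..b, (A *ᵥ x t + B *ᵥ u t) = ∫ t in a..b, (A *ᵥ x' t + B *ᵥ u' t) :=
    intervalIntegral.integral_congr_ae_restrict <|
      ae_restrict_of_ae_restrict_of_subset (uIoc_subset_uIcc.trans (hI.uIcc_subset ha hb)) <|
        hx.mp <| hu.mono fun t hut hxt => by simp only [hxt, hut]
  have hEb : E *ᵥ x b = E *ᵥ x' b := hEx ⟨hab, le_rfl⟩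
  have hEa : E *ᵥ x a = E *ᵥ x' a := hEx ⟨le_rfl, hab⟩
  rw [← hEb, ← hEa, ← hint]
  exact h.2.2 a ha b hb hab

end Trajectories

theorem mulVec_comp_inl_of_mul_firstRows_eq_zero {c n m nh k : ℕ}
    {E : Matrix (Fin c) (Fin n) ℝ} {Dl : Matrix (Fin n ⊕ Fin m) (Fin k) ℝ}
    (hED : E * firstRows Dl = 0) (Cl : Matrix (Fin n ⊕ Fin m) (Fin nh) ℝ) (w : Fin nh → ℝ)
    (z : Fin k → ℝ) :
    E *ᵥ (fun i => (Cl *ᵥ w + Dl *ᵥ z) (Sum.inl i)) = (E * firstRows Cl) *ᵥ w := by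
  change E *ᵥ (firstRows Cl *ᵥ w + firstRows Dl *ᵥ z) = _
  rw [mulVec_add, mulVec_mulVec, mulVec_mulVec, hED, zero_mulVec, add_zero]

/-- Theorem (dae2lin:theo_main), second half: any output trajectory of an associated
ODE-LTI is a solution of the DAE. -/
theorem ode_output_is_dae_solution {c n m nh k : ℕ}
    (E A : Matrix (Fin c) (Fin n) ℝ) (B : Matrix (Fin c) (Fin m) ℝ)
    (Al : Matrix (Fin nh) (Fin nh) ℝ) (Bl : Matrix (Fin nh) (Fin k) ℝ)
    (Cl : Matrix (Fin n ⊕ Fin m) (Fin nh) ℝ) (Dl : Matrix (Fin n ⊕ Fin m) (Fin k) ℝ)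
    (hassoc : IsAssociated E A B Al Bl Cl Dl)
    (I : Set ℝ) (hI : IsNiceInterval I)
    (v : ℝ → Fin nh → ℝ) (g : ℝ → Fin k → ℝ)
    (hvg : IsStateTraj Al Bl I v g) :
    IsDAESolution E A B I
      (fun t i => (Cl.mulVec (v t) + Dl.mulVec (g t)) (Sum.inl i))
      (fun t j => (Cl.mulVec (v t) + Dl.mulVec (g t)) (Sum.inr j)) := by
  obtain ⟨-, -, hED, -, hreal⟩ := hassoc
  obtain ⟨x, u, hxu, hae⟩ := (hreal I hI).2 v g hvg
  refine hxu.of_ae_eq hI.ordConnected (hae.mono fun t ht => funext fun i => congrFun ht (.inl i))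
    (hae.mono fun t ht => funext fun j => congrFun ht (.inr j)) fun a ha b hb => ?_
  simp only [mulVec_comp_inl_of_mul_firstRows_eq_zero hED]
  exact (continuous_const.matrix_mulVec continuous_id).comp_continuousOn
    (hvg.continuousOn_Icc hI.ordConnected ha hb)
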